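/- Let M be a finite dimensional graded module over the KLR algebra R(α) of type A_n and let i, j ∈ I with |i − j| = 1. For any words k_1, k_2 with k_1 * k_2 ∈ I^{α − 2α_i − α_j}, one has 2·dim(1_{k_1*(i,j,i)*k_2} M) = dim(1_{k_1*(j,i,i)*k_2} M) + dim(1_{k_1*(i,i,j)*k_2} M). -/

import Mathlib

open scoped BigOperators

/-- A word of length `d` in the index set `I = {1,…,n}` (encoded 0-based as `Fin n`). -/
abbrev Word (n d : ℕ) := Fin d → Fin n

/-- The content of a word: the element of `Q⁺` it represents. -/
def wContent {n d : ℕ} (w : Word n d) : Fin n → ℕ :=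
  fun i => (Finset.univ.filter fun k => w k = i).card

/-- Entries of the type `A_n` Cartan matrix, on the 0-based indices. -/
def cartanA (a b : ℕ) : ℤ :=
  if a = b then 2 else if a + 1 = b ∨ b + 1 = a then -1 else 0

/-- Generators of the KLR algebra `R(α)` of type `A_n`: idempotents `1_w`, dots `x_k`,
crossings `τ_s` (the crossing `τ_s` acts on strands `s, s+1`, 0-based). -/
inductive KLRGen (n d : ℕ) : Type
  | e : Word n d → KLRGen n d
  | x : Fin d → KLRGen n d
  | t : Fin (d - 1) → KLRGen n d

abbrev KLRFree (n d : ℕ) := FreeAlgebra ℂ (KLRGen n d)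

def ge {n d : ℕ} (w : Word n d) : KLRFree n d := FreeAlgebra.ι ℂ (KLRGen.e w)
def gx {n d : ℕ} (k : Fin d) : KLRFree n d := FreeAlgebra.ι ℂ (KLRGen.x k)
def gt {n d : ℕ} (s : Fin (d - 1)) : KLRFree n d := FreeAlgebra.ι ℂ (KLRGen.t s)

/-- The left strand of the crossing `τ_s`. -/
def posl {d : ℕ} (s : Fin (d - 1)) : Fin d := ⟨s.1, by have := s.isLt; omega⟩
/-- The right strand of the crossing `τ_s`. -/
def posr {d : ℕ} (s : Fin (d - 1)) : Fin d := ⟨s.1 + 1, by have := s.isLt; omega⟩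

/-- The word with the entries at positions `s, s+1` exchanged. -/
def wswap {n d : ℕ} (s : Fin (d - 1)) (w : Word n d) : Word n d :=
  w ∘ Equiv.swap (posl s) (posr s)

/-- The defining relations of the KLR algebra `R(α)` of type `A_n`. -/
inductive KLRRel (n d : ℕ) (α : Fin n → ℕ) : KLRFree n d → KLRFree n d → Prop
  | unit : KLRRel n d α
      (∑ w ∈ Finset.univ.filter (fun w : Word n d => wContent w = α), ge w) 1
  | offblock (w : Word n d) : wContent w ≠ α → KLRRel n d α (ge w) 0
  | orth (w w' : Word n d) : w ≠ w' → KLRRel n d α (ge w * ge w') 0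
  | idem (w : Word n d) : KLRRel n d α (ge w * ge w) (ge w)
  | xe (k : Fin d) (w : Word n d) : KLRRel n d α (gx k * ge w) (ge w * gx k)
  | te (s : Fin (d - 1)) (w : Word n d) :
      KLRRel n d α (gt s * ge w) (ge (wswap s w) * gt s)
  | xx (k l : Fin d) : KLRRel n d α (gx k * gx l) (gx l * gx k)
  | ttfar (s s' : Fin (d - 1)) : s.1 + 1 < s'.1 ∨ s'.1 + 1 < s.1 →
      KLRRel n d α (gt s * gt s') (gt s' * gt s)
  | tsq (s : Fin (d - 1)) (w : Word n d) :
      KLRRel n d α (gt s * gt s * ge w)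
        (if w (posl s) = w (posr s) then 0
         else if cartanA (w (posl s)).1 (w (posr s)).1 = 0 then ge w
         else (gx (posl s) + gx (posr s)) * ge w)
  | braid (s s' : Fin (d - 1)) (h : s'.1 = s.1 + 1) (w : Word n d) :
      KLRRel n d α ((gt s * gt s' * gt s - gt s' * gt s * gt s') * ge w)
        (if w (posl s) = w (posr s') ∧ cartanA (w (posl s)).1 (w (posr s)).1 = -1
         then ge w else 0)
  | txk (s : Fin (d - 1)) (k : Fin d) (w : Word n d) :
      KLRRel n d α ((gt s * gx k - gx (Equiv.swap (posl s) (posr s) k) * gt s) * ge w)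
        (if k = posl s ∧ w (posl s) = w (posr s) then ge w
         else if k = posr s ∧ w (posl s) = w (posr s) then -(ge w) else 0)

/-- The Khovanov–Lauda–Rouquier algebra `R(α)` of type `A_n`, for `α ∈ Q⁺` of height `d`. -/
abbrev KLR (n d : ℕ) (α : Fin n → ℕ) := RingQuot (KLRRel n d α)

/-- The idempotent `1_w ∈ R(α)`. -/
noncomputable def Ew {n d : ℕ} (α : Fin n → ℕ) (w : Word n d) : KLR n d α :=
  RingQuot.mkAlgHom ℂ (KLRRel n d α) (ge w)
/-- The dot `x_k ∈ R(α)`. -/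
noncomputable def Xg {n d : ℕ} (α : Fin n → ℕ) (k : Fin d) : KLR n d α :=
  RingQuot.mkAlgHom ℂ (KLRRel n d α) (gx k)
/-- The crossing `τ_s ∈ R(α)`. -/
noncomputable def Tg {n d : ℕ} (α : Fin n → ℕ) (s : Fin (d - 1)) : KLR n d α :=
  RingQuot.mkAlgHom ℂ (KLRRel n d α) (gt s)

/-- A grading on an `R(α)`-module `M`, making it a graded module: a direct sum decomposition
into `ℂ`-subspaces such that the `1_w` preserve degrees, the dots raise degrees by `2` and
the crossings `τ_s 1_w` shift degrees by `−a_{w_s, w_{s+1}}`. -/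
structure KLRGrading (n d : ℕ) (α : Fin n → ℕ) (M : Type*) [AddCommGroup M] [Module ℂ M]
    [Module (KLR n d α) M] : Type _ where
  piece : ℤ → Submodule ℂ M
  internal : DirectSum.IsInternal piece
  e_stable : ∀ (w : Word n d) (i : ℤ), ∀ m ∈ piece i, Ew α w • m ∈ piece i
  x_shift : ∀ (k : Fin d) (i : ℤ), ∀ m ∈ piece i, Xg α k • m ∈ piece (i + 2)
  t_shift : ∀ (s : Fin (d - 1)) (w : Word n d) (i : ℤ), ∀ m ∈ piece i,
      (Tg α s * Ew α w) • m ∈ piece (i - cartanA (w (posl s)).1 (w (posr s)).1)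

/-- The word space `1_w M` of an `R(α)`-module, as a `ℂ`-subspace. -/
noncomputable def wordSpace {n d : ℕ} (α : Fin n → ℕ) (w : Word n d) (M : Type*)
    [AddCommGroup M] [Module ℂ M] [Module (KLR n d α) M] : Submodule ℂ M :=
  Submodule.span ℂ (Set.range fun m : M => Ew α w • m)

/-! Write `T = τ_s`, `U = τ_{s+1}` for the crossings on the strands carrying `iji`, and `W₁`, `W₂`,
`W₃` for the word spaces of `k₁ iji k₂`, `k₁ jii k₂`, `k₁ iij k₂`. The maps
`(x₁, x₂) ↦ (U T x₁ + T x₂, T U x₁ + U x₂)` from `W₁ × W₁` to `W₂ × W₃` and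
`(y₂, y₃) ↦ (T y₂ - U y₃, T U y₂ - U T y₃)` back are both injective, whence
`2 dim W₁ = dim W₂ + dim W₃`. For the first map this comes from the braid relation
`TUT = 1 + UTU` on `W₁` together with `U² = 0` on `W₂` and `T² = 0` on `W₃`. For the second, the
braid relation on `W₃` and the nil-Hecke relations on the two `i` strands of `W₂` give
`y₂ = (x_{s+1} - x_{s+2}) U y₂` and then `U y₂ = 2 U y₂`; symmetrically for `y₃`. -/

/-- The relations among the crossings `T = τ_s`, `U = τ_{s+1}` and the dots `P, Q, R` on the
strands `s, s+1, s+2`, between `W₁ = 1_{…iji…} M`, `W₂ = 1_{…jii…} M`, `W₃ = 1_{…iij…} M`. -/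
structure SerreRelations {K V : Type*} [Ring K] [AddCommGroup V] [Module K V]
    (W₁ W₂ W₃ : Submodule K V) (T U P Q R : V →ₗ[K] V) : Prop where
  T_mem₁₂ : ∀ v ∈ W₁, T v ∈ W₂
  T_mem₂₁ : ∀ v ∈ W₂, T v ∈ W₁
  T_mem₃₃ : ∀ v ∈ W₃, T v ∈ W₃
  U_mem₁₃ : ∀ v ∈ W₁, U v ∈ W₃
  U_mem₃₁ : ∀ v ∈ W₃, U v ∈ W₁
  U_mem₂₂ : ∀ v ∈ W₂, U v ∈ W₂
  braid₁ : ∀ v ∈ W₁, T (U (T v)) = v + U (T (U v))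
  braid₂ : ∀ v ∈ W₂, T (U (T v)) = U (T (U v))
  braid₃ : ∀ v ∈ W₃, T (U (T v)) = U (T (U v))
  T_T₂ : ∀ v ∈ W₂, T (T v) = P v + Q v
  U_U₂ : ∀ v ∈ W₂, U (U v) = 0
  U_P₂ : ∀ v ∈ W₂, U (P v) = P (U v)
  U_Q₂ : ∀ v ∈ W₂, U (Q v) = v + R (U v)
  U_R₂ : ∀ v ∈ W₂, U (R v) = Q (U v) - v
  T_T₃ : ∀ v ∈ W₃, T (T v) = 0
  U_U₃ : ∀ v ∈ W₃, U (U v) = Q v + R v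
  T_P₃ : ∀ v ∈ W₃, T (P v) = v + Q (T v)
  T_Q₃ : ∀ v ∈ W₃, T (Q v) = P (T v) - v
  T_R₃ : ∀ v ∈ W₃, T (R v) = R (T v)

namespace SerreRelations

section Ring

variable {K V : Type*} [Ring K] [AddCommGroup V] [Module K V] {W₁ W₂ W₃ : Submodule K V}
  {T U P Q R : V →ₗ[K] V}

def fwd (h : SerreRelations W₁ W₂ W₃ T U P Q R) : W₁ × W₁ →ₗ[K] W₂ × W₃ :=
  let T₁₂ := T.restrict h.T_mem₁₂
  let U₁₃ := U.restrict h.U_mem₁₃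
  ((U.restrict h.U_mem₂₂ ∘ₗ T₁₂).coprod T₁₂).prod ((T.restrict h.T_mem₃₃ ∘ₗ U₁₃).coprod U₁₃)

def bwd (h : SerreRelations W₁ W₂ W₃ T U P Q R) : W₂ × W₃ →ₗ[K] W₁ × W₁ :=
  let T₂₁ := T.restrict h.T_mem₂₁
  let U₃₁ := U.restrict h.U_mem₃₁
  (T₂₁.coprod (-U₃₁)).prod
    ((T₂₁ ∘ₗ U.restrict h.U_mem₂₂).coprod (-(U₃₁ ∘ₗ T.restrict h.T_mem₃₃)))

theorem coe_fwd_fst (h : SerreRelations W₁ W₂ W₃ T U P Q R) (x : W₁ × W₁) :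
    ((h.fwd x).1 : V) = U (T x.1) + T x.2 := rfl

theorem coe_fwd_snd (h : SerreRelations W₁ W₂ W₃ T U P Q R) (x : W₁ × W₁) :
    ((h.fwd x).2 : V) = T (U x.1) + U x.2 := rfl

theorem coe_bwd_fst (h : SerreRelations W₁ W₂ W₃ T U P Q R) (y : W₂ × W₃) :
    ((h.bwd y).1 : V) = T y.1 - U y.2 := by
  simp [bwd, sub_eq_add_neg]

theorem coe_bwd_snd (h : SerreRelations W₁ W₂ W₃ T U P Q R) (y : W₂ × W₃) :
    ((h.bwd y).2 : V) = T (U y.1) - U (T y.2) := by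
  simp [bwd, sub_eq_add_neg]

theorem injective_fwd (h : SerreRelations W₁ W₂ W₃ T U P Q R) : Function.Injective h.fwd := by
  rw [injective_iff_map_eq_zero]
  rintro ⟨⟨x₁, hx₁⟩, ⟨x₂, hx₂⟩⟩ hx
  have h₂ : U (T x₁) + T x₂ = 0 := by simpa [coe_fwd_fst] using congrArg (fun x => (x.1 : V)) hx
  have h₃ : T (U x₁) + U x₂ = 0 := by simpa [coe_fwd_snd] using congrArg (fun x => (x.2 : V)) hx
  obtain rfl : x₂ = 0 := by
    have e₂ : T (U (T x₂)) = 0 := by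
      simpa [h.U_U₂ _ (h.T_mem₁₂ _ hx₁)] using congrArg (fun v => T (U v)) h₂
    have e₃ : U (T (U x₂)) = 0 := by
      simpa [h.T_T₃ _ (h.U_mem₁₃ _ hx₁)] using congrArg (fun v => U (T v)) h₃
    simpa [e₂, e₃] using (h.braid₁ x₂ hx₂).symm
  obtain rfl : x₁ = 0 := by
    rw [map_zero, add_zero] at h₂ h₃
    simpa [h₂, h₃] using (h.braid₁ x₁ hx₁).symm
  rfl

theorem fst_eq_zero_of_bwd_eq_zero (h : SerreRelations W₁ W₂ W₃ T U P Q R) {y : W₂ × W₃}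
    (hy : h.bwd y = 0) : y.1 = 0 := by
  obtain ⟨⟨y₂, hy₂⟩, ⟨y₃, hy₃⟩⟩ := y
  have h₁ : T y₂ = U y₃ := by
    simpa [coe_bwd_fst, sub_eq_zero] using congrArg (fun x => (x.1 : V)) hy
  have h₁' : T (U y₂) = U (T y₃) := by
    simpa [coe_bwd_snd, sub_eq_zero] using congrArg (fun x => (x.2 : V)) hy
  have hUy₂ : U y₂ ∈ W₂ := h.U_mem₂₂ _ hy₂
  have key : y₂ = Q (U y₂) - R (U y₂) := by
    have e : U (T (T y₂)) = T (T (U y₂)) := by rw [h₁, h₁', h.braid₃ _ hy₃]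
    rw [h.T_T₂ _ hy₂, h.T_T₂ _ hUy₂, map_add, h.U_P₂ _ hy₂, h.U_Q₂ _ hy₂] at e
    linear_combination (norm := module) e
  have hU : U y₂ = 0 := by
    have e := congrArg U key
    rw [map_sub, h.U_Q₂ _ hUy₂, h.U_R₂ _ hUy₂, h.U_U₂ _ hy₂, map_zero, map_zero] at e
    linear_combination (norm := module) -e
  simpa [hU] using key

theorem snd_eq_zero_of_bwd_eq_zero (h : SerreRelations W₁ W₂ W₃ T U P Q R) {y : W₂ × W₃}
    (hy : h.bwd y = 0) : y.2 = 0 := by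
  obtain ⟨⟨y₂, hy₂⟩, ⟨y₃, hy₃⟩⟩ := y
  have h₁ : T y₂ = U y₃ := by
    simpa [coe_bwd_fst, sub_eq_zero] using congrArg (fun x => (x.1 : V)) hy
  have h₁' : T (U y₂) = U (T y₃) := by
    simpa [coe_bwd_snd, sub_eq_zero] using congrArg (fun x => (x.2 : V)) hy
  have hTy₃ : T y₃ ∈ W₃ := h.T_mem₃₃ _ hy₃
  have key : y₃ = P (T y₃) - Q (T y₃) := by
    have e : T (U (U y₃)) = U (U (T y₃)) := by rw [← h₁, ← h₁', h.braid₂ _ hy₂]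
    rw [h.U_U₃ _ hy₃, h.U_U₃ _ hTy₃, map_add, h.T_Q₃ _ hy₃, h.T_R₃ _ hy₃] at e
    linear_combination (norm := module) -e
  have hT : T y₃ = 0 := by
    have e := congrArg T key
    rw [map_sub, h.T_P₃ _ hTy₃, h.T_Q₃ _ hTy₃, h.T_T₃ _ hy₃, map_zero, map_zero] at e
    linear_combination (norm := module) -e
  simpa [hT] using key

theorem injective_bwd (h : SerreRelations W₁ W₂ W₃ T U P Q R) : Function.Injective h.bwd := by
  rw [injective_iff_map_eq_zero]
  intro y hy
  exact Prod.ext (h.fst_eq_zero_of_bwd_eq_zero hy) (h.snd_eq_zero_of_bwd_eq_zero hy)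

end Ring

theorem two_mul_finrank_eq {K V : Type*} [DivisionRing K] [AddCommGroup V] [Module K V]
    [FiniteDimensional K V] {W₁ W₂ W₃ : Submodule K V} {T U P Q R : V →ₗ[K] V}
    (h : SerreRelations W₁ W₂ W₃ T U P Q R) :
    2 * Module.finrank K W₁ = Module.finrank K W₂ + Module.finrank K W₃ := by
  have h₁ := LinearMap.finrank_le_finrank_of_injective h.injective_fwd
  have h₂ := LinearMap.finrank_le_finrank_of_injective h.injective_bwd
  rw [Module.finrank_prod, Module.finrank_prod] at h₁ h₂
  omega

end SerreRelations

theorem cartanA_comm (a b : ℕ) : cartanA a b = cartanA b a := by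
  unfold cartanA
  split_ifs <;> omega

section Words

variable {n d : ℕ}

theorem posl_ne_posr (s : Fin (d - 1)) : posl s ≠ posr s := by
  simp [posl, posr, Fin.ext_iff]

theorem posl_eq_posr_of_val_eq_add_one {s t : Fin (d - 1)} (hst : t.1 = s.1 + 1) :
    posl t = posr s :=
  Fin.ext hst

variable {s : Fin (d - 1)} {w w' : Word n d}

@[simp] theorem wswap_apply_posl : wswap s w (posl s) = w (posr s) := by
  simp [wswap]

@[simp] theorem wswap_apply_posr : wswap s w (posr s) = w (posl s) := by
  simp [wswap]

theorem wswap_apply_of_ne {q : Fin d} (hl : q ≠ posl s) (hr : q ≠ posr s) :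
    wswap s w q = w q := by
  simp [wswap, Equiv.swap_apply_of_ne_of_ne hl hr]

@[simp] theorem wswap_wswap : wswap s (wswap s w) = w := by
  funext q
  simp [wswap]

theorem wswap_eq_self (h : w (posl s) = w (posr s)) : wswap s w = w := by
  funext q
  by_cases hl : q = posl s
  · simp [hl, h]
  by_cases hr : q = posr s
  · simp [hr, h]
  exact wswap_apply_of_ne hl hr

theorem apply_eq_getElem_of_ofFn_eq {l : List (Fin n)} (h : List.ofFn w = l) (q : Fin d) :
    w q = l[q.1]'(by simp [← h]) := by
  subst h
  simp

theorem eq_wswap_of_ofFn_eq {l₁ l₂ : List (Fin n)} {a b : Fin n} (hs : s.1 = l₁.length)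
    (hw : List.ofFn w = l₁ ++ a :: b :: l₂) (hw' : List.ofFn w' = l₁ ++ b :: a :: l₂) :
    w' = wswap s w := by
  funext q
  rw [apply_eq_getElem_of_ofFn_eq hw', wswap, Function.comp_apply,
    apply_eq_getElem_of_ofFn_eq hw]
  by_cases hl : q = posl s
  · subst hl
    simp [List.getElem_append_right, posl, posr, hs]
  by_cases hr : q = posr s
  · subst hr
    simp [List.getElem_append_right, posl, posr, hs]
  rw [Equiv.swap_apply_of_ne_of_ne hl hr]
  have hl' : q.1 ≠ l₁.length := by simpa [Fin.ext_iff, posl, hs] using hl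
  have hr' : q.1 ≠ l₁.length + 1 := by simpa [Fin.ext_iff, posr, hs] using hr
  simp only [List.getElem_append]
  split_ifs
  · rfl
  · obtain ⟨k, hk⟩ : ∃ k, q.1 - l₁.length = k + 2 := ⟨q.1 - l₁.length - 2, by omega⟩
    simp [hk]

end Words

section KLRModule

variable {n d : ℕ} {α : Fin n → ℕ}

theorem Ew_mul_self (w : Word n d) : Ew α w * Ew α w = Ew α w := by
  simpa only [Ew, map_mul] using RingQuot.mkAlgHom_rel ℂ (KLRRel.idem (α := α) w)

variable {M : Type*} [AddCommGroup M] [Module ℂ M] [Module (KLR n d α) M]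
  [IsScalarTower ℂ (KLR n d α) M] {w w' : Word n d} {x : M} {s t : Fin (d - 1)}

theorem mem_wordSpace_iff : x ∈ wordSpace α w M ↔ Ew α w • x = x := by
  have : wordSpace α w M = LinearMap.range (DistribSMul.toLinearMap ℂ M (Ew α w)) := by
    rw [← Submodule.span_eq (LinearMap.range _), LinearMap.coe_range]; rfl
  rw [this]
  constructor
  · rintro ⟨m, rfl⟩
    simp [smul_smul, Ew_mul_self]
  · exact fun h => ⟨x, h⟩

theorem smul_mem_wordSpace {z : KLR n d α} (hz : z * Ew α w = Ew α w' * z)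
    (hx : x ∈ wordSpace α w M) : z • x ∈ wordSpace α w' M := by
  rw [mem_wordSpace_iff] at hx ⊢
  rw [smul_smul, ← hz, mul_smul, hx]

theorem mkAlgHom_smul_of_rel {a b : KLRFree n d} (hab : KLRRel n d α (a * ge w) b)
    (hx : x ∈ wordSpace α w M) :
    RingQuot.mkAlgHom ℂ (KLRRel n d α) a • x = RingQuot.mkAlgHom ℂ (KLRRel n d α) b • x := by
  rw [mem_wordSpace_iff] at hx
  rw [← RingQuot.mkAlgHom_rel ℂ hab, map_mul, mul_smul]
  exact congrArg _ hx.symm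

theorem mkAlgHom_ge_smul (hx : x ∈ wordSpace α w M) :
    RingQuot.mkAlgHom ℂ (KLRRel n d α) (ge w) • x = x :=
  mem_wordSpace_iff.1 hx

theorem mkAlgHom_mul_ge_smul (c : KLRFree n d) (hx : x ∈ wordSpace α w M) :
    RingQuot.mkAlgHom ℂ (KLRRel n d α) (c * ge w) • x =
      RingQuot.mkAlgHom ℂ (KLRRel n d α) c • x := by
  rw [map_mul, mul_smul, mkAlgHom_ge_smul hx]

theorem Tg_smul_mem_wordSpace (s : Fin (d - 1)) (hx : x ∈ wordSpace α w M) :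
    Tg α s • x ∈ wordSpace α (wswap s w) M :=
  smul_mem_wordSpace
    (by simpa only [Tg, Ew, map_mul] using RingQuot.mkAlgHom_rel ℂ (KLRRel.te (α := α) s w)) hx

theorem Tg_smul_Tg_smul_of_eq (h : w (posl s) = w (posr s)) (hx : x ∈ wordSpace α w M) :
    Tg α s • Tg α s • x = 0 := by
  have := mkAlgHom_smul_of_rel (KLRRel.tsq s w) hx
  rwa [if_pos h, map_zero, zero_smul, map_mul, mul_smul] at this

theorem Tg_smul_Tg_smul_of_cartanA_eq_neg_one (h : cartanA (w (posl s)).1 (w (posr s)).1 = -1)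
    (hx : x ∈ wordSpace α w M) :
    Tg α s • Tg α s • x = Xg α (posl s) • x + Xg α (posr s) • x := by
  have hne : w (posl s) ≠ w (posr s) := fun he => by simp [he, cartanA] at h
  have := mkAlgHom_smul_of_rel (KLRRel.tsq s w) hx
  rwa [if_neg hne, if_neg (by rw [h]; decide), mkAlgHom_mul_ge_smul _ hx, map_mul, mul_smul,
    map_add, add_smul] at this

theorem Tg_braid_smul (hst : t.1 = s.1 + 1) (h : w (posl s) = w (posr t))
    (hc : cartanA (w (posl s)).1 (w (posr s)).1 = -1) (hx : x ∈ wordSpace α w M) :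
    Tg α s • Tg α t • Tg α s • x = x + Tg α t • Tg α s • Tg α t • x := by
  have := mkAlgHom_smul_of_rel (KLRRel.braid s t hst w) hx
  simp only [if_pos (And.intro h hc), mkAlgHom_ge_smul hx, map_sub, map_mul, sub_smul, mul_smul,
    sub_eq_iff_eq_add] at this
  exact this

theorem Tg_braid_smul_of_ne (hst : t.1 = s.1 + 1) (h : w (posl s) ≠ w (posr t))
    (hx : x ∈ wordSpace α w M) :
    Tg α s • Tg α t • Tg α s • x = Tg α t • Tg α s • Tg α t • x := by
  have := mkAlgHom_smul_of_rel (KLRRel.braid s t hst w) hx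
  simp only [if_neg (fun hc : _ ∧ _ => h hc.1), map_zero, zero_smul, map_sub, map_mul, sub_smul,
    mul_smul, sub_eq_zero] at this
  exact this

theorem Tg_smul_Xg_smul_of_ne {k : Fin d} (hl : k ≠ posl s) (hr : k ≠ posr s)
    (hx : x ∈ wordSpace α w M) : Tg α s • Xg α k • x = Xg α k • Tg α s • x := by
  have := mkAlgHom_smul_of_rel (KLRRel.txk s k w) hx
  simp only [if_neg (fun hc : _ ∧ _ => hl hc.1), if_neg (fun hc : _ ∧ _ => hr hc.1),
    Equiv.swap_apply_of_ne_of_ne hl hr, map_zero, zero_smul, map_sub, map_mul, sub_smul, mul_smul,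
    sub_eq_zero] at this
  exact this

theorem Tg_smul_Xg_posl_smul_of_eq (h : w (posl s) = w (posr s)) (hx : x ∈ wordSpace α w M) :
    Tg α s • Xg α (posl s) • x = x + Xg α (posr s) • Tg α s • x := by
  have := mkAlgHom_smul_of_rel (KLRRel.txk s (posl s) w) hx
  rw [if_pos (And.intro rfl h)] at this
  simp only [Equiv.swap_apply_left, mkAlgHom_ge_smul hx, map_sub, map_mul, sub_smul, mul_smul,
    sub_eq_iff_eq_add] at this
  exact this

theorem Tg_smul_Xg_posr_smul_of_eq (h : w (posl s) = w (posr s)) (hx : x ∈ wordSpace α w M) :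
    Tg α s • Xg α (posr s) • x = Xg α (posl s) • Tg α s • x - x := by
  have := mkAlgHom_smul_of_rel (KLRRel.txk s (posr s) w) hx
  rw [if_neg (fun hc : posr s = posl s ∧ _ => posl_ne_posr s hc.1.symm), if_pos (And.intro rfl h)]
    at this
  simp only [Equiv.swap_apply_right, map_neg, neg_smul, mkAlgHom_ge_smul hx, map_sub, map_mul,
    sub_smul, mul_smul, sub_eq_iff_eq_add, neg_add_eq_sub] at this
  exact this

theorem serreRelations_wordSpace (hst : t.1 = s.1 + 1)
    (hw : cartanA (w (posl s)).1 (w (posr s)).1 = -1) (hwt : w (posr t) = w (posl s)) :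
    SerreRelations (wordSpace α w M) (wordSpace α (wswap s w) M) (wordSpace α (wswap t w) M)
      (DistribSMul.toLinearMap ℂ M (Tg α s)) (DistribSMul.toLinearMap ℂ M (Tg α t))
      (DistribSMul.toLinearMap ℂ M (Xg α (posl s))) (DistribSMul.toLinearMap ℂ M (Xg α (posr s)))
      (DistribSMul.toLinearMap ℂ M (Xg α (posr t))) := by
  have hpos : posl t = posr s := posl_eq_posr_of_val_eq_add_one hst
  have h₃₁ : posr t ≠ posl s := by simp only [posr, posl, ne_eq, Fin.ext_iff]; omega
  have h₃₂ : posr t ≠ posr s := by simp only [posr, ne_eq, Fin.ext_iff]; omega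
  have h₁₂ : posl s ≠ posl t := hpos ▸ posl_ne_posr s
  have hne : w (posl s) ≠ w (posr s) := fun he => by simp [he, cartanA] at hw
  have e₂₃ : wswap s w (posr t) = w (posl s) := by rw [wswap_apply_of_ne h₃₁ h₃₂, hwt]
  have e₃₁ : wswap t w (posl s) = w (posl s) := wswap_apply_of_ne h₁₂ h₃₁.symm
  have e₃₂ : wswap t w (posr s) = w (posl s) := by rw [← hpos, wswap_apply_posl, hwt]
  have e₃₃ : wswap t w (posr t) = w (posr s) := by rw [wswap_apply_posr, hpos]
  have h₂ : wswap s w (posl t) = wswap s w (posr t) := by rw [hpos, wswap_apply_posr, e₂₃]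
  have h₃ : wswap t w (posl s) = wswap t w (posr s) := by rw [e₃₁, e₃₂]
  exact
    { T_mem₁₂ := fun _ => Tg_smul_mem_wordSpace s
      T_mem₂₁ := fun _ hv => by simpa using Tg_smul_mem_wordSpace s hv
      T_mem₃₃ := fun _ hv => by simpa [wswap_eq_self h₃] using Tg_smul_mem_wordSpace s hv
      U_mem₁₃ := fun _ => Tg_smul_mem_wordSpace t
      U_mem₃₁ := fun _ hv => by simpa using Tg_smul_mem_wordSpace t hv
      U_mem₂₂ := fun _ hv => by simpa [wswap_eq_self h₂] using Tg_smul_mem_wordSpace t hv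
      braid₁ := fun _ => Tg_braid_smul hst hwt.symm hw
      braid₂ := fun _ => Tg_braid_smul_of_ne hst (by rw [wswap_apply_posl, e₂₃]; exact hne.symm)
      braid₃ := fun _ => Tg_braid_smul_of_ne hst (by rw [e₃₁, e₃₃]; exact hne)
      T_T₂ := fun _ => Tg_smul_Tg_smul_of_cartanA_eq_neg_one
        (by rw [wswap_apply_posl, wswap_apply_posr, cartanA_comm, hw])
      U_U₂ := fun _ => Tg_smul_Tg_smul_of_eq h₂
      U_P₂ := fun _ => Tg_smul_Xg_smul_of_ne h₁₂ h₃₁.symm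
      U_Q₂ := fun _ hv => hpos ▸ Tg_smul_Xg_posl_smul_of_eq h₂ hv
      U_R₂ := fun _ hv => hpos ▸ Tg_smul_Xg_posr_smul_of_eq h₂ hv
      T_T₃ := fun _ => Tg_smul_Tg_smul_of_eq h₃
      U_U₃ := fun _ hv => hpos ▸ Tg_smul_Tg_smul_of_cartanA_eq_neg_one
        (by rw [hpos, e₃₂, e₃₃, hw]) hv
      T_P₃ := fun _ => Tg_smul_Xg_posl_smul_of_eq h₃
      T_Q₃ := fun _ => Tg_smul_Xg_posr_smul_of_eq h₃
      T_R₃ := fun _ => Tg_smul_Xg_smul_of_ne h₃₁ h₃₂ }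

end KLRModule

theorem serre_adjacent_dim_eq_general (n d : ℕ) (α : Fin n → ℕ)
    (M : Type) [AddCommGroup M] [Module ℂ M] [Module (KLR n d α) M]
    [IsScalarTower ℂ (KLR n d α) M]
    (hfd : FiniteDimensional ℂ M)
    (i j : Fin n) (hij : i.1 + 1 = j.1 ∨ j.1 + 1 = i.1)
    (k₁ k₂ : List (Fin n)) (w₁ w₂ w₃ : Word n d)
    (hw₁ : List.ofFn w₁ = k₁ ++ [i, j, i] ++ k₂)
    (hw₂ : List.ofFn w₂ = k₁ ++ [j, i, i] ++ k₂)
    (hw₃ : List.ofFn w₃ = k₁ ++ [i, i, j] ++ k₂) :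
    2 * Module.finrank ℂ (wordSpace α w₁ M) =
      Module.finrank ℂ (wordSpace α w₂ M) + Module.finrank ℂ (wordSpace α w₃ M) := by
  have hd : d = k₁.length + 3 + k₂.length := by
    have := congrArg List.length hw₁
    simp only [List.length_ofFn, List.length_append, List.length_cons, List.length_nil] at this
    omega
  let s : Fin (d - 1) := ⟨k₁.length, by omega⟩
  let t : Fin (d - 1) := ⟨k₁.length + 1, by omega⟩
  simp only [List.append_assoc, List.cons_append, List.nil_append] at hw₁ hw₂ hw₃
  obtain rfl : w₂ = wswap s w₁ := eq_wswap_of_ofFn_eq rfl hw₁ hw₂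
  obtain rfl : w₃ = wswap t w₁ :=
    eq_wswap_of_ofFn_eq (l₁ := k₁ ++ [i]) (by simp [t]) (by simpa using hw₁) (by simpa using hw₃)
  have e₁ : w₁ (posl s) = i := by simp [apply_eq_getElem_of_ofFn_eq hw₁, posl, s]
  have e₂ : w₁ (posr s) = j := by simp [apply_eq_getElem_of_ofFn_eq hw₁, posr, s]
  have e₃ : w₁ (posr t) = i := by
    simp [apply_eq_getElem_of_ofFn_eq hw₁, posr, t, List.getElem_append_right, add_assoc]
  have hc : cartanA i.1 j.1 = -1 := by simp [cartanA, hij, show i.1 ≠ j.1 by omega]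
  exact (serreRelations_wordSpace rfl (e₁ ▸ e₂ ▸ hc) (e₃.trans e₁.symm)).two_mul_finrank_eq

/-- Let `M` be a finite dimensional graded module over the KLR algebra `R(α)`
of type `A_n` and `i, j ∈ I` with `|i − j| = 1`.  For any words `k₁, k₂` with
`k₁ * k₂ ∈ I^{α − 2α_i − α_j}`,
`2·dim (1_{k₁*(i,j,i)*k₂} M) = dim (1_{k₁*(j,i,i)*k₂} M) + dim (1_{k₁*(i,i,j)*k₂} M)`. -/
theorem serre_adjacent_dim_eq (n d : ℕ) (α : Fin n → ℕ)
    (M : Type) [AddCommGroup M] [Module ℂ M] [Module (KLR n d α) M]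
    [IsScalarTower ℂ (KLR n d α) M]
    (hgr : Nonempty (KLRGrading n d α M)) (hfd : FiniteDimensional ℂ M)
    (i j : Fin n) (hij : i.1 + 1 = j.1 ∨ j.1 + 1 = i.1)
    (k₁ k₂ : List (Fin n)) (w₁ w₂ w₃ : Word n d)
    (hw₁ : List.ofFn w₁ = k₁ ++ [i, j, i] ++ k₂)
    (hw₂ : List.ofFn w₂ = k₁ ++ [j, i, i] ++ k₂)
    (hw₃ : List.ofFn w₃ = k₁ ++ [i, i, j] ++ k₂)
    (hc₁ : wContent w₁ = α) (hc₂ : wContent w₂ = α) (hc₃ : wContent w₃ = α) :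
    2 * Module.finrank ℂ (wordSpace α w₁ M) =
      Module.finrank ℂ (wordSpace α w₂ M) + Module.finrank ℂ (wordSpace α w₃ M) :=
  serre_adjacent_dim_eq_general n d α M hfd i j hij k₁ k₂ w₁ w₂ w₃ hw₁ hw₂ hw₃
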